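/- Let p be a prime, n ≥ 1, and for each i = 1, …, n let I_i = {α_i·k + β_i : k = 0, 1, …, H_i−1} ⊆ F_p be an arithmetic progression with α_i, β_i ∈ F_p, α_i ≠ 0 and 1 ≤ H_i ≤ p. Let S = I_1 × … × I_n ⊆ F_p^n. Then irreg(S) ≤ Π_{i=1}^n (9·p·log p / H_i), where log denotes the natural logarithm. -/

import Mathlib

noncomputable section

/-- The standard additive character `ψ(u) = exp(2πi·u.val/p)` on `F_p`. -/
def psiP (p : ℕ) (u : ZMod p) : ℂ :=
  Complex.exp (2 * Real.pi * Complex.I * (u.val : ℂ) / (p : ℂ))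

/-- Fourier transform of the indicator function of `S ⊆ F_p`. -/
def hatP (p : ℕ) [NeZero p] (S : Set (ZMod p)) (b : ZMod p) : ℂ :=
  (p : ℂ)⁻¹ * ∑ a : ZMod p, S.indicator (fun _ => (1 : ℂ)) a * psiP p (-(a * b))

/-- The irregularity of a subset `S ⊆ F_p`. -/
def irregP (p : ℕ) [NeZero p] (S : Set (ZMod p)) : ℝ :=
  ((p : ℝ) / S.ncard) * ∑ b : ZMod p, ‖hatP p S b‖

/-- Fourier transform of the indicator function of `S ⊆ F_p^n`. -/
def hatPn {n : ℕ} (p : ℕ) [NeZero p] (S : Set (Fin n → ZMod p)) (b : Fin n → ZMod p) : ℂ :=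
  ((p : ℂ) ^ n)⁻¹ *
    ∑ a : Fin n → ZMod p, S.indicator (fun _ => (1 : ℂ)) a * psiP p (-(∑ i, a i * b i))

/-- The irregularity of a subset `S ⊆ F_p^n`. -/
def irregPn {n : ℕ} (p : ℕ) [NeZero p] (S : Set (Fin n → ZMod p)) : ℝ :=
  ((p : ℝ) ^ n / S.ncard) * ∑ b : Fin n → ZMod p, ‖hatPn p S b‖

end

/-! The Fourier transform of a product set factorises, so the irregularity of `I₁ × ⋯ × Iₙ` is
the product of the irregularities of the `Iᵢ`, and it suffices to bound that of one progression
`I = {αk + β : k < H}`. Its Fourier coefficient at `0` is `H/p`; at `b ≠ 0` it is `p⁻¹` times a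
geometric sum of ratio `ψ(-αb) ≠ 1`, hence at most `2 / (p‖ψ(-αb) - 1‖)`. As `b` runs over `F_p^×`
so does `c = -αb`, and Jordan's inequality gives `‖ψ(c) - 1‖ = 2 sin(πc/p) ≥ 4 min(c, p - c)/p`,
so these bounds add up to at most a harmonic sum, `1 + log p`. Altogether
`irreg(I) ≤ (H + p(1 + log p))/H ≤ 9 p log p / H`. -/

open Finset Real ZMod

lemma AddChar.map_sum_eq_prod {ι A M : Type*} [AddCommMonoid A] [CommMonoid M] (ψ : AddChar A M)
    (s : Finset ι) (f : ι → A) : ψ (∑ i ∈ s, f i) = ∏ i ∈ s, ψ (f i) :=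
  map_prod ψ.toMonoidHom (fun i ↦ Multiplicative.ofAdd (f i)) s

lemma Set.ncard_univ_pi {ι : Type*} [Fintype ι] {α : ι → Type*} (s : ∀ i, Set (α i)) :
    (Set.univ.pi s).ncard = ∏ i, (s i).ncard := by
  rw [← Nat.card_coe_set_eq, Nat.card_congr (Equiv.Set.univPi s), Nat.card_pi]
  simp only [Nat.card_coe_set_eq]

lemma Real.two_div_pi_mul_min_le_sin {x : ℝ} (hx₀ : 0 ≤ x) (hxπ : x ≤ π) :
    2 / π * min x (π - x) ≤ sin x := by
  rcases le_total x (π / 2) with hx | hx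
  · exact (mul_le_mul_of_nonneg_left (min_le_left _ _) (by positivity)).trans (mul_le_sin hx₀ hx)
  · rw [← sin_pi_sub]
    exact (mul_le_mul_of_nonneg_left (min_le_right _ _) (by positivity)).trans
      (mul_le_sin (by linarith) (by linarith))

lemma inv_min_le_inv_add_inv {a b : ℝ} (ha : 0 ≤ a) (hb : 0 ≤ b) : (min a b)⁻¹ ≤ a⁻¹ + b⁻¹ := by
  rcases min_cases a b with ⟨h, -⟩ | ⟨h, -⟩ <;> rw [h]
  · exact le_add_of_nonneg_right (inv_nonneg.2 hb)
  · exact le_add_of_nonneg_left (inv_nonneg.2 ha)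

lemma norm_geom_sum_le {𝕜 : Type*} [NormedField 𝕜] {z : 𝕜} (hz : ‖z‖ ≤ 1) (hz₁ : z ≠ 1) (H : ℕ) :
    ‖∑ k ∈ range H, z ^ k‖ ≤ 2 * ‖z - 1‖⁻¹ := by
  rw [geom_sum_eq hz₁, norm_div, div_eq_mul_inv]
  gcongr
  calc ‖z ^ H - 1‖ ≤ ‖z‖ ^ H + ‖(1 : 𝕜)‖ := by rw [← norm_pow]; exact norm_sub_le _ _
    _ ≤ 2 := by rw [norm_one]; linarith [pow_le_one₀ (norm_nonneg z) hz (n := H)]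

namespace ZMod

variable {p : ℕ} [NeZero p]

lemma norm_stdAddChar_sub_one (u : ZMod p) : ‖stdAddChar u - 1‖ = 2 * sin (π * u.val / p) := by
  have hu : π * u.val / p ≤ π := by
    rw [div_le_iff₀ (by exact_mod_cast NeZero.pos p)]
    exact mul_le_mul_of_nonneg_left (by exact_mod_cast u.val_lt.le) pi_pos.le
  have hexp : 2 * π * Complex.I * u.val / p = Complex.I * ↑(2 * (π * u.val / p)) := by
    push_cast; ring
  rw [stdAddChar_apply, toCircle_apply, hexp, Complex.norm_exp_I_mul_ofReal_sub_one,
    mul_div_cancel_left₀ _ two_ne_zero, norm_mul, Real.norm_two,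
    Real.norm_of_nonneg (sin_nonneg_of_nonneg_of_le_pi (by positivity) hu)]

/-- For `u ≠ 0` we have `(-u).val = p - u.val`; at `u = 0` both sides vanish since `0⁻¹ = 0`. -/
lemma inv_norm_stdAddChar_sub_one_le (u : ZMod p) :
    ‖stdAddChar u - 1‖⁻¹ ≤ p / 4 * ((u.val : ℝ)⁻¹ + ((-u).val : ℝ)⁻¹) := by
  rcases eq_or_ne u 0 with rfl | hu
  · simp
  have : NeZero u := ⟨hu⟩
  have hp : (0 : ℝ) < p := by exact_mod_cast NeZero.pos p
  have hval : ((-u).val : ℝ) = p - u.val := by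
    rw [val_neg_of_ne_zero, Nat.cast_sub u.val_lt.le]
  set m := min (u.val : ℝ) ((-u).val)
  have hm : 0 < m :=
    lt_min (by exact_mod_cast val_pos.2 hu) (by exact_mod_cast val_pos.2 (neg_ne_zero.2 hu))
  have hsin : 2 / π * (m * (π / p)) ≤ sin (u.val * (π / p)) := by
    have := two_div_pi_mul_min_le_sin (x := u.val * (π / p)) (by positivity) (by
      rw [← le_div_iff₀ (by positivity), div_div_cancel₀ pi_ne_zero]
      exact_mod_cast u.val_lt.le)
    rwa [show π - u.val * (π / p) = (-u).val * (π / p) by rw [hval]; field_simp,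
      ← min_mul_of_nonneg _ _ (by positivity)] at this
  have hnorm : 4 / p * m ≤ ‖stdAddChar u - 1‖ := by
    rw [norm_stdAddChar_sub_one, show π * u.val / p = u.val * (π / p) by ring]
    calc 4 / p * m = 2 * (2 / π * (m * (π / p))) := by field_simp; ring
      _ ≤ 2 * sin (u.val * (π / p)) := by gcongr
  calc ‖stdAddChar u - 1‖⁻¹ ≤ (4 / p * m)⁻¹ := by gcongr
    _ = p / 4 * m⁻¹ := by rw [mul_inv, inv_div]
    _ ≤ p / 4 * ((u.val : ℝ)⁻¹ + ((-u).val : ℝ)⁻¹) := by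
        gcongr; exact inv_min_le_inv_add_inv (by positivity) (by positivity)

/-- The `u = 0` term is `0⁻¹ = 0`; the others are `1/j` for `1 ≤ j < p`, read off through
`ZMod (m + 1) = Fin (m + 1)`. -/
lemma sum_inv_val_le_one_add_log : ∑ u : ZMod p, (u.val : ℝ)⁻¹ ≤ 1 + log p := by
  obtain ⟨m, rfl⟩ := Nat.exists_eq_succ_of_ne_zero (NeZero.ne p)
  calc ∑ u : ZMod (m + 1), (u.val : ℝ)⁻¹ = harmonic m := by
        refine (Fin.sum_univ_eq_sum_range (fun j ↦ (j : ℝ)⁻¹) _).trans ?_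
        simp [sum_range_succ', harmonic]
    _ ≤ harmonic (m + 1) := by
        rw [harmonic_succ]; push_cast; exact le_add_of_nonneg_right (by positivity)
    _ ≤ 1 + log ↑(m + 1) := harmonic_le_one_add_log _

lemma sum_inv_norm_stdAddChar_sub_one_le :
    ∑ u : ZMod p, ‖stdAddChar u - 1‖⁻¹ ≤ p / 2 * (1 + log p) :=
  calc ∑ u : ZMod p, ‖stdAddChar u - 1‖⁻¹
      ≤ ∑ u : ZMod p, p / 4 * ((u.val : ℝ)⁻¹ + ((-u).val : ℝ)⁻¹) :=
        sum_le_sum fun u _ ↦ inv_norm_stdAddChar_sub_one_le u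
    _ = p / 2 * ∑ u : ZMod p, (u.val : ℝ)⁻¹ := by
        rw [← mul_sum, sum_add_distrib, Fintype.sum_equiv (Equiv.neg (ZMod p))
          (fun u ↦ ((-u).val : ℝ)⁻¹) (fun u ↦ (u.val : ℝ)⁻¹) fun _ ↦ rfl]
        ring
    _ ≤ p / 2 * (1 + log p) := by gcongr; exact sum_inv_val_le_one_add_log

end ZMod

section Fourier

variable {p n : ℕ} [NeZero p]

lemma psiP_eq_stdAddChar : psiP p = stdAddChar := by
  ext u
  rw [stdAddChar_apply, toCircle_apply, psiP]

lemma hatP_coe_finset (s : Finset (ZMod p)) (b : ZMod p) :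
    hatP p s b = (p : ℂ)⁻¹ * ∑ a ∈ s, stdAddChar (-(a * b)) := by
  simp [hatP, psiP_eq_stdAddChar, Set.indicator_apply, sum_ite_mem]

lemma hatP_coe_finset_zero (s : Finset (ZMod p)) : hatP p s 0 = #s / p := by
  simp [hatP_coe_finset, div_eq_inv_mul]

lemma irregP_nonneg (S : Set (ZMod p)) : 0 ≤ irregP p S := by
  unfold irregP; positivity

lemma hatPn_univ_pi (I : Fin n → Set (ZMod p)) (b : Fin n → ZMod p) :
    hatPn p (Set.univ.pi I) b = ∏ i, hatP p (I i) (b i) := by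
  have hterm (a : Fin n → ZMod p) :
      (Set.univ.pi I).indicator (fun _ ↦ (1 : ℂ)) a * psiP p (-(∑ i, a i * b i)) =
        ∏ i, (I i).indicator (fun _ ↦ 1) (a i) * psiP p (-(a i * b i)) := by
    rw [prod_mul_distrib, psiP_eq_stdAddChar, ← sum_neg_distrib, AddChar.map_sum_eq_prod,
      ← coe_univ, ← Pi.one_def, Set.indicator_pi_one_apply]
    rfl
  simp only [hatPn, hatP, hterm, Fintype.prod_sum, prod_mul_distrib, prod_const, card_univ,
    Fintype.card_fin, inv_pow]

lemma irregPn_univ_pi (I : Fin n → Set (ZMod p)) :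
    irregPn p (Set.univ.pi I) = ∏ i, irregP p (I i) := by
  simp only [irregPn, irregP, hatPn_univ_pi, norm_prod, Fintype.prod_sum, Set.ncard_univ_pi,
    prod_mul_distrib, prod_div_distrib, prod_const, card_univ, Fintype.card_fin, Nat.cast_prod]

end Fourier

section ArithProg

variable {p : ℕ} [Fact p.Prime]

def arithProg (α β : ZMod p) (H : ℕ) : Finset (ZMod p) :=
  (range H).image fun k : ℕ ↦ α * k + β

variable {α : ZMod p} (β : ZMod p) {H : ℕ}

lemma injOn_arithProg (hα : α ≠ 0) (hH : H ≤ p) :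
    Set.InjOn (fun k : ℕ ↦ α * k + β) (range H) := by
  intro k hk l hl hkl
  simp only [coe_range, Set.mem_Iio] at hk hl
  have := congrArg ZMod.val (mul_left_cancel₀ hα (add_right_cancel hkl))
  rwa [val_natCast_of_lt (hk.trans_le hH), val_natCast_of_lt (hl.trans_le hH)] at this

lemma card_arithProg (hα : α ≠ 0) (hH : H ≤ p) : #(arithProg α β H) = H := by
  rw [arithProg, card_image_of_injOn (injOn_arithProg β hα hH), card_range]

lemma hatP_arithProg (hα : α ≠ 0) (hH : H ≤ p) (b : ZMod p) :
    hatP p (arithProg α β H) b =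
      (p : ℂ)⁻¹ * (stdAddChar (-(β * b)) * ∑ k ∈ range H, stdAddChar (-(α * b)) ^ k) := by
  rw [hatP_coe_finset, arithProg, sum_image (injOn_arithProg β hα hH)]
  congr 1
  rw [mul_sum]
  refine sum_congr rfl fun k _ ↦ ?_
  rw [← AddChar.map_nsmul_eq_pow, ← AddChar.map_add_eq_mul, nsmul_eq_mul]
  ring_nf

lemma norm_hatP_arithProg_le (hα : α ≠ 0) (hH : H ≤ p) {b : ZMod p} (hb : b ≠ 0) :
    ‖hatP p (arithProg α β H) b‖ ≤ 2 / p * ‖stdAddChar (-(α * b)) - 1‖⁻¹ := by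
  have hψ : stdAddChar (-(α * b)) ≠ 1 := by
    rw [← AddChar.map_zero_eq_one (stdAddChar (N := p)), injective_stdAddChar.ne_iff]
    exact neg_ne_zero.2 (mul_ne_zero hα hb)
  rw [hatP_arithProg β hα hH, norm_mul, norm_mul, AddChar.norm_apply, one_mul, norm_inv,
    Complex.norm_natCast, div_eq_inv_mul, mul_assoc]
  gcongr
  exact norm_geom_sum_le (AddChar.norm_apply _ _).le hψ H

lemma sum_norm_hatP_arithProg_le (hα : α ≠ 0) (hH : H ≤ p) :
    ∑ b, ‖hatP p (arithProg α β H) b‖ ≤ H / p + (1 + log p) := by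
  have hp : (p : ℝ) ≠ 0 := by exact_mod_cast NeZero.ne p
  rw [← add_sum_erase _ _ (mem_univ 0), hatP_coe_finset_zero, card_arithProg β hα hH]
  gcongr
  · simp
  calc ∑ b ∈ univ.erase 0, ‖hatP p (arithProg α β H) b‖
      ≤ ∑ b ∈ univ.erase 0, 2 / p * ‖stdAddChar (-(α * b)) - 1‖⁻¹ :=
        sum_le_sum fun b hb ↦ norm_hatP_arithProg_le β hα hH (ne_of_mem_erase hb)
    _ ≤ ∑ b, 2 / p * ‖stdAddChar (-(α * b)) - 1‖⁻¹ :=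
        sum_le_sum_of_subset_of_nonneg (erase_subset _ _) fun _ _ _ ↦ by positivity
    _ = 2 / p * ∑ c : ZMod p, ‖stdAddChar c - 1‖⁻¹ := by
        rw [← mul_sum, Fintype.sum_equiv (Equiv.mulLeft₀ (-α) (neg_ne_zero.2 hα)) _
          (fun c ↦ ‖stdAddChar c - 1‖⁻¹) fun b ↦ by simp [neg_mul]]
    _ ≤ 2 / p * (p / 2 * (1 + log p)) := by gcongr; exact sum_inv_norm_stdAddChar_sub_one_le
    _ = 1 + log p := by field_simp

lemma irregP_arithProg_le (hα : α ≠ 0) (hH : H ≤ p) :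
    irregP p (arithProg α β H) ≤ 9 * p * log p / H := by
  have hp : (0 : ℝ) < p := by exact_mod_cast NeZero.pos p
  have hlog : 1 / 4 ≤ log p := by
    have := log_le_log two_pos (by exact_mod_cast (Fact.out : p.Prime).two_le : (2 : ℝ) ≤ p)
    linarith [log_two_gt_d9]
  have hHp : (H : ℝ) ≤ p := by exact_mod_cast hH
  rw [irregP, Set.ncard_coe_finset, card_arithProg β hα hH]
  calc p / H * ∑ b, ‖hatP p (arithProg α β H) b‖ ≤ p / H * (H / p + (1 + log p)) := by
        gcongr; exact sum_norm_hatP_arithProg_le β hα hH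
    _ = (H + p * (1 + log p)) / H := by
        rw [div_mul_eq_mul_div, mul_add, mul_div_cancel₀ _ hp.ne']
    _ ≤ 9 * p * log p / H := by
        gcongr
        nlinarith [mul_le_mul_of_nonneg_left hlog hp.le]

end ArithProg

theorem irreg_product_of_arith_progressions_general (p : ℕ) [Fact p.Prime] (n : ℕ)
    (α β : Fin n → ZMod p) (H : Fin n → ℕ) (hα : ∀ i, α i ≠ 0)
    (hHp : ∀ i, H i ≤ p) :
    irregPn p {a : Fin n → ZMod p | ∀ i, ∃ k : ℕ, k < H i ∧ a i = α i * (k : ZMod p) + β i} ≤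
      ∏ i, (9 * p * Real.log p / H i) := by
  have hS : {a : Fin n → ZMod p | ∀ i, ∃ k : ℕ, k < H i ∧ a i = α i * (k : ZMod p) + β i} =
      Set.univ.pi fun i ↦ ↑(arithProg (α i) (β i) (H i)) := by
    ext a
    simp [arithProg, eq_comm]
  rw [hS, irregPn_univ_pi]
  exact prod_le_prod (fun i _ ↦ irregP_nonneg _)
    fun i _ ↦ irregP_arithProg_le (β i) (hα i) (hHp i)

/-- The irregularity of a product of arithmetic progressions is at most
`∏ᵢ (9·p·log p / Hᵢ)`. -/
theorem irreg_product_of_arith_progressions (p : ℕ) [Fact p.Prime] (n : ℕ) (hn : 1 ≤ n)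
    (α β : Fin n → ZMod p) (H : Fin n → ℕ) (hα : ∀ i, α i ≠ 0)
    (hH1 : ∀ i, 1 ≤ H i) (hHp : ∀ i, H i ≤ p) :
    irregPn p {a : Fin n → ZMod p | ∀ i, ∃ k : ℕ, k < H i ∧ a i = α i * (k : ZMod p) + β i} ≤
      ∏ i, (9 * p * Real.log p / H i) :=
  irreg_product_of_arith_progressions_general p n α β H hα hHp
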